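/- Let x be an alcove, m ∈ ℤ, and Fix(x,m) = {i : x^{(1)}_i = m and P(x)(i) = i}. Then Fix(rot(x), m) = c^{-1}(Fix(x,m)), where c is the n-cycle (1 2 ... n). -/

import Mathlib

open Finset

/-- Standard basis vector `e_j` in `ℤⁿ`. -/
def ev (n : ℕ) (j : Fin n) : Fin n → ℤ := fun k => if k = j then 1 else 0

/-- The coweight `ϖ_t = e_1 + ⋯ + e_t` (t ones followed by zeros). -/
def varpi (n t : ℕ) : Fin n → ℤ := fun j => if (j : ℕ) < t then 1 else 0

/-- Dominance order `μ ⪯ λ`: equal total sums, partial sums of `μ` bounded by those of `λ`. -/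
def DomLE {n : ℕ} (μ lam : Fin n → ℤ) : Prop :=
  (∑ i, μ i = ∑ i, lam i) ∧
  ∀ k : Fin n, ∑ i ∈ Finset.Iic k, μ i ≤ ∑ i ∈ Finset.Iic k, lam i

/-- A coweight is dominant iff its coordinates are weakly decreasing. -/
def IsDominant {n : ℕ} (v : Fin n → ℤ) : Prop := ∀ i j : Fin n, i ≤ j → v j ≤ v i

/-- The weakly decreasing rearrangement `dom(v)` of `v`. -/
noncomputable def domOf {n : ℕ} (v : Fin n → ℤ) : Fin n → ℤ :=
  v ∘ Tuple.sort (fun i => -v i)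

/-- `succA x i` is `x^{(i+1)}`, with the convention `x^{(n+1)} = x^{(1)} + (1,…,1)`. -/
def succA {n : ℕ} (x : Fin n → Fin n → ℤ) (i : Fin n) : Fin n → ℤ :=
  if h : (i : ℕ) + 1 < n then x ⟨(i : ℕ) + 1, h⟩ else fun j => x ⟨0, i.pos⟩ j + 1

/-- A tuple `(x^{(1)},…,x^{(n)})` is an alcove. -/
def IsAlcove {n : ℕ} (x : Fin n → Fin n → ℤ) : Prop :=
  (∀ i : Fin n, ∀ j, x i j ≤ succA x i j) ∧
  (∀ i : Fin n, (i : ℕ) + 1 < n → ∑ j, succA x i j = (∑ j, x i j) + 1)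

/-- `P` is the permutation `P(x)` of the alcove `x`: `x^{(i+1)} = x^{(i)} + e_{P(x)(i)}`. -/
def IsPermOf {n : ℕ} (x : Fin n → Fin n → ℤ) (P : Equiv.Perm (Fin n)) : Prop :=
  ∀ i : Fin n, ∀ j, succA x i j = x i j + ev n (P i) j

/-- A permutation acts on `ℤⁿ` by permuting coordinates: `(σv)_{σ(i)} = v_i`. -/
def permAct {n : ℕ} (σ : Equiv.Perm (Fin n)) (v : Fin n → ℤ) : Fin n → ℤ :=
  fun j => v (σ.symm j)

/-- The `n`-cycle `c = (1 2 ⋯ n)`. -/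
def cyc (n : ℕ) [NeZero n] : Equiv.Perm (Fin n) := Equiv.addRight 1

/-- Rotation of alcoves. -/
def rotA {n : ℕ} [NeZero n] (x : Fin n → Fin n → ℤ) : Fin n → Fin n → ℤ := fun i =>
  if h : (i : ℕ) + 1 < n then
    permAct (cyc n)⁻¹ (fun j => x ⟨(i : ℕ) + 1, h⟩ j - varpi n 1 j)
  else
    fun j => permAct (cyc n)⁻¹ (x 0) j + varpi n (n - 1) j

/-- An alcove is `λ`-permissible if `dom(x^{(i)} - ϖ_{i-1}) ⪯ λ` for all `i`. -/
noncomputable def Permissible {n : ℕ} (lam : Fin n → ℤ) (x : Fin n → Fin n → ℤ) : Prop :=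
  ∀ i : Fin n, DomLE (domOf (fun j => x i j - varpi n (i : ℕ) j)) lam

/-- The Kottwitz–Rapoport relation `i ⊴_x j` (six-case rule). -/
def TriLE {n : ℕ} (x : Fin n → Fin n → ℤ) (P : Equiv.Perm (Fin n)) (i j : Fin n) : Prop :=
  (x ⟨0, i.pos⟩ j < x ⟨0, i.pos⟩ i) ∨
  (x ⟨0, i.pos⟩ i = x ⟨0, i.pos⟩ j ∧
    ((P.symm i < i ∧ P.symm j < j ∧ j ≤ i) ∨
     (P.symm i < i ∧ j ≤ P.symm j) ∨
     (P.symm i = i ∧ P.symm j = j ∧ i = j) ∨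
     (P.symm i = i ∧ j < P.symm j) ∨
     (i < P.symm i ∧ j < P.symm j ∧ j ≤ i)))

/-!
With the convention `x^{(n+1)} = x^{(1)} + (1,…,1)`, the rotation is uniformly
`rot(x)^{(i)} = c⁻¹(x^{(i+1)} - ϖ_1)`. Consecutive differences of `rot(x)` are therefore the
`c⁻¹`-translates of those of `x`, so `P(rot x) = c⁻¹ P(x) c`, and `i` is fixed by `P(rot x)` iff
`c(i)` is fixed by `P(x)`. If `P(x)` fixes `k = c(i)`, then `e_{P(x)(1)}` and `ϖ_1 = e_1` agree at
`k`, so `rot(x)^{(1)}_i = x^{(2)}_k - ϖ_1(k) = x^{(1)}_k`.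
-/

section

variable {n : ℕ}

lemma ev_injective : Function.Injective (ev n) := by
  intro a b h
  simpa [ev] using congrFun h a

lemma ev_apply_perm_inv (σ : Equiv.Perm (Fin n)) (a j : Fin n) :
    ev n (σ⁻¹ a) j = ev n a (σ j) := by
  simp only [ev, Equiv.Perm.eq_inv_iff_eq]

lemma ev_apply_perm_of_fixed {P : Equiv.Perm (Fin n)} {j : Fin n} (hj : P j = j) (a : Fin n) :
    ev n (P a) j = ev n a j := by
  simp only [ev]
  congr 1
  rw [← hj, P.apply_eq_iff_eq, hj]

lemma IsPermOf.unique {x : Fin n → Fin n → ℤ} {P Q : Equiv.Perm (Fin n)}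
    (hP : IsPermOf x P) (hQ : IsPermOf x Q) : P = Q := by
  ext i : 1
  refine ev_injective (funext fun j => ?_)
  linarith [hP i j, hQ i j]

variable [NeZero n]

lemma varpi_one : varpi n 1 = ev n 0 := by
  funext j
  simp only [varpi, ev, Nat.lt_one_iff, Fin.ext_iff, Fin.val_zero]

lemma cyc_eq_of_lt {i : Fin n} (h : (i : ℕ) + 1 < n) : cyc n i = ⟨i + 1, h⟩ :=
  Fin.ext (Fin.val_add_one_of_lt' h)

lemma cyc_eq_zero_of_not_lt {i : Fin n} (h : ¬ (i : ℕ) + 1 < n) : cyc n i = 0 := by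
  have : (i : ℕ) + 1 = n := by omega
  ext
  simp [cyc, Fin.val_add, this]

lemma succA_apply (x : Fin n → Fin n → ℤ) (i j : Fin n) :
    succA x i j = x (cyc n i) j + if (i : ℕ) + 1 < n then 0 else 1 := by
  unfold succA
  split_ifs with h
  · rw [add_zero, cyc_eq_of_lt h]
  · rw [cyc_eq_zero_of_not_lt h]; rfl

lemma varpi_sub_one_add_varpi_one_cyc (j : Fin n) :
    varpi n (n - 1) j + varpi n 1 (cyc n j) = 1 := by
  by_cases h : (j : ℕ) + 1 < n
  · simp [varpi, cyc_eq_of_lt h, h]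
  · simp [varpi, cyc_eq_zero_of_not_lt h]
    omega

lemma rotA_apply (x : Fin n → Fin n → ℤ) (i j : Fin n) :
    rotA x i j = succA x i (cyc n j) - varpi n 1 (cyc n j) := by
  by_cases h : (i : ℕ) + 1 < n
  · simp [rotA, succA, h, permAct, Equiv.Perm.inv_def]
  · simp [rotA, succA, h, permAct, Equiv.Perm.inv_def]
    linarith [varpi_sub_one_add_varpi_one_cyc j]

lemma succA_rotA_sub_rotA (x : Fin n → Fin n → ℤ) (i j : Fin n) :
    succA (rotA x) i j - rotA x i j = succA x (cyc n i) (cyc n j) - x (cyc n i) (cyc n j) := by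
  rw [succA_apply, rotA_apply, rotA_apply, succA_apply x i]
  ring

lemma IsPermOf.rotA {x : Fin n → Fin n → ℤ} {P : Equiv.Perm (Fin n)} (hP : IsPermOf x P) :
    IsPermOf (rotA x) ((cyc n)⁻¹ * P * cyc n) := by
  intro i j
  rw [Equiv.Perm.mul_apply, Equiv.Perm.mul_apply, ev_apply_perm_inv]
  linarith [succA_rotA_sub_rotA x i j, hP (cyc n i) (cyc n j)]

lemma rotA_zero_apply_of_fixed {x : Fin n → Fin n → ℤ} {P : Equiv.Perm (Fin n)}
    (hP : IsPermOf x P) {i : Fin n} (hi : P (cyc n i) = cyc n i) :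
    rotA x 0 i = x 0 (cyc n i) := by
  rw [rotA_apply, hP, ev_apply_perm_of_fixed hi, varpi_one, add_sub_cancel_right]

end

theorem fix_rot_general (n : ℕ) [NeZero n] (x : Fin n → Fin n → ℤ)
    (P P' : Equiv.Perm (Fin n)) (hP : IsPermOf x P) (hP' : IsPermOf (rotA x) P') (m : ℤ) :
    ∀ i : Fin n,
      (rotA x 0 i = m ∧ P' i = i) ↔ (x 0 (cyc n i) = m ∧ P (cyc n i) = cyc n i) := by
  intro i
  obtain rfl : P' = (cyc n)⁻¹ * P * cyc n := hP'.unique hP.rotA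
  rw [Equiv.Perm.mul_apply, Equiv.Perm.mul_apply, Equiv.Perm.inv_eq_iff_eq]
  exact and_congr_left fun hi => by rw [rotA_zero_apply_of_fixed hP hi]

theorem fix_rot (n : ℕ) [NeZero n] (x : Fin n → Fin n → ℤ) (hx : IsAlcove x)
    (P P' : Equiv.Perm (Fin n)) (hP : IsPermOf x P) (hP' : IsPermOf (rotA x) P') (m : ℤ) :
    ∀ i : Fin n,
      (rotA x 0 i = m ∧ P' i = i) ↔ (x 0 (cyc n i) = m ∧ P (cyc n i) = cyc n i) :=
  fix_rot_general n x P P' hP hP' m
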